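/- arXiv:1712.00864 — 2 statements merged into one kernel-verified Lean document; each statement's English description precedes it below -/
import Mathlib

section
/- For all integers a, b > 1, IOE(n ↦ 2^(a^n)) ≡_W IOE(n ↦ 2^(b^n)) (Muchnik equivalence) and AED(n ↦ 2^(a^n)) ≡_S AED(n ↦ 2^(b^n)) (Medvedev equivalence). -/
open Filter

namespace Paper

/-! ### Oracle computability -/

/-- Codes for oracle Turing functionals (partial recursive operators with one
function oracle), following the pattern of `Nat.Partrec.Code`. -/
inductive OracleCode : Type
  | zero
  | succ
  | left
  | right
  | oracle
  | pair : OracleCode → OracleCode → OracleCode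
  | comp : OracleCode → OracleCode → OracleCode
  | prec : OracleCode → OracleCode → OracleCode
  | rfind' : OracleCode → OracleCode

/-- Evaluation of an oracle code with oracle `g : ℕ → ℕ`. -/
def OracleCode.eval (g : ℕ → ℕ) : OracleCode → ℕ →. ℕ
  | .zero => pure 0
  | .succ => Nat.succ
  | .left => ↑fun n : ℕ => n.unpair.1
  | .right => ↑fun n : ℕ => n.unpair.2
  | .oracle => ↑fun n : ℕ => g n
  | .pair cf cg => fun n => Nat.pair <$> eval g cf n <*> eval g cg n
  | .comp cf cg => fun n => eval g cg n >>= eval g cf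
  | .prec cf cg =>
    Nat.unpaired fun a n =>
      n.rec (eval g cf a) fun y IH => do
        let i ← IH
        eval g cg (Nat.pair a (Nat.pair y i))
  | .rfind' cf =>
    Nat.unpaired fun a m =>
      (Nat.rfind fun n => (fun m => m = 0) <$> eval g cf (Nat.pair a (n + m))).map (· + m)

/-- Turing reducibility: `f ≤_T g` iff some oracle functional with oracle `g`
computes `f` (totally). -/
def TuringLE (f g : ℕ → ℕ) : Prop :=
  ∃ c : OracleCode, ∀ n, OracleCode.eval g c n = Part.some (f n)

/-- Turing equivalence. -/
def TuringEquiv (f g : ℕ → ℕ) : Prop := TuringLE f g ∧ TuringLE g f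

/-- A mass problem is a set of functions `ℕ → ℕ`. -/
abbrev MassProblem := Set (ℕ → ℕ)

/-- Muchnik (weak) reducibility `B ≤_W C`. -/
def MuchnikLE (B C : MassProblem) : Prop := ∀ g ∈ C, ∃ f ∈ B, TuringLE f g

/-- Muchnik equivalence. -/
def MuchnikEquiv (B C : MassProblem) : Prop := MuchnikLE B C ∧ MuchnikLE C B

/-- Medvedev (strong) reducibility `B ≤_S C`: a single Turing functional is
defined on all of `C` and maps each member of `C` to a member of `B`. -/
def MedvedevLE (B C : MassProblem) : Prop :=
  ∃ c : OracleCode, ∀ g ∈ C, ∃ f ∈ B, ∀ n, OracleCode.eval g c n = Part.some (f n)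

/-- Medvedev equivalence. -/
def MedvedevEquiv (B C : MassProblem) : Prop := MedvedevLE B C ∧ MedvedevLE C B

/-! ### Density notions -/

/-- Lower (asymptotic) density of a set of naturals. -/
noncomputable def lowerDensity (z : Set ℕ) : ℝ :=
  Filter.liminf (fun n => (Nat.card ↥(z ∩ Set.Iio n) : ℝ) / n) Filter.atTop

/-- `x ↔ y`: the agreement set of two functions. -/
def agree (x y : ℕ → ℕ) : Set ℕ := {n | x n = y n}

/-- A bit sequence is a `{0,1}`-valued function. -/
def IsBitSeq (x : ℕ → ℕ) : Prop := ∀ n, x n < 2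

/-- The mass problem `D(p)`. -/
def probD (p : ℝ) : MassProblem :=
  {y | IsBitSeq y ∧ ∀ x : ℕ → ℕ, IsBitSeq x → Computable x →
    lowerDensity (agree x y) ≤ p}

/-- The mass problem `B(p)`. -/
def probB (p : ℝ) : MassProblem :=
  {y | IsBitSeq y ∧ ∀ x : ℕ → ℕ, IsBitSeq x → Computable x →
    p < lowerDensity (agree x y)}

/-- The mass problem `IOE(h)`. -/
def IOE (h : ℕ → ℕ) : MassProblem :=
  {f | ∀ x : ℕ → ℕ, Computable x → (∀ n, x n < h n) → ∃ᶠ n in atTop, f n = x n}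

/-- The mass problem `AED(h)`. -/
def AED (h : ℕ → ℕ) : MassProblem :=
  {f | (∀ n, f n < h n) ∧ ∀ x : ℕ → ℕ, Computable x → ∀ᶠ n in atTop, f n ≠ x n}

/-! ### Hamming distance and the problems `D⟨≠*,ĥ,q⟩`, `B⟨≠*,ĥ,q⟩` -/

/-- Normalized Hamming distance between `a` and `b`, viewed as binary strings
of length `r` (via binary expansion with leading zeros). -/
noncomputable def nhd (r a b : ℕ) : ℝ :=
  (((Finset.range r).filter fun i => a.testBit i ≠ b.testBit i).card : ℝ) / r

/-- The mass problem `D⟨≠*, ĥ, q⟩`. -/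
def probDneq (hh : ℕ → ℕ) (q : ℝ) : MassProblem :=
  {y | (∀ n, y n < 2 ^ hh n) ∧ ∀ x : ℕ → ℕ, Computable x → (∀ n, x n < 2 ^ hh n) →
    ∃ᶠ n in atTop, nhd (hh n) (x n) (y n) < q}

/-- The mass problem `B⟨≠*, ĥ, q⟩`. -/
def probBneq (hh : ℕ → ℕ) (q : ℝ) : MassProblem :=
  {y | (∀ n, y n < 2 ^ hh n) ∧ ∀ x : ℕ → ℕ, Computable x → (∀ n, x n < 2 ^ hh n) →
    ∀ᶠ n in atTop, q ≤ nhd (hh n) (x n) (y n)}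

/-! ### Slaloms, coded as functions `ℕ → ℕ` via binary digits -/

/-- `s : ℕ → ℕ`, coding finite sets via binary digits (`i ∈ s(n)` iff the
`i`-th bit of `s n` is set), is an `L`-slalom bounded by `u`. -/
def IsSlalomCode (u : ℕ → ℕ) (L : ℕ) (s : ℕ → ℕ) : Prop :=
  ∀ n, (∀ i, (s n).testBit i = true → i < u n) ∧
    ((Finset.range (u n)).filter fun i => (s n).testBit i = true).card ≤ L

/-- The mass problem `D⟨∌*, u, L⟩`. -/
def probDSlalom (u : ℕ → ℕ) (L : ℕ) : MassProblem :=
  {s | IsSlalomCode u L s ∧ ∀ y : ℕ → ℕ, Computable y → (∀ n, y n < u n) →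
    ∃ᶠ n in atTop, (s n).testBit (y n) = true}

/-- The mass problem `B⟨∌*, u, L⟩`. -/
def probBSlalom (u : ℕ → ℕ) (L : ℕ) : MassProblem :=
  {y | (∀ n, y n < u n) ∧ ∀ s : ℕ → ℕ, Computable s → IsSlalomCode u L s →
    ∀ᶠ n in atTop, (s n).testBit (y n) = false}

/-! ### Gamma and Delta values -/

/-- `γ(A)`. -/
noncomputable def gammaVal (A : ℕ → ℕ) : ℝ :=
  sSup ((fun x => lowerDensity (agree A x)) '' {x | IsBitSeq x ∧ Computable x})

/-- `Γ(A)`. -/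
noncomputable def GammaVal (A : ℕ → ℕ) : ℝ :=
  sInf (gammaVal '' {Y | IsBitSeq Y ∧ TuringEquiv Y A})

/-- `δ(A)`. -/
noncomputable def deltaVal (A : ℕ → ℕ) : ℝ :=
  sInf ((fun x => lowerDensity (agree A x)) '' {x | IsBitSeq x ∧ Computable x})

/-- `Δ(A)`. -/
noncomputable def DeltaVal (A : ℕ → ℕ) : ℝ :=
  sSup (deltaVal '' {Y | IsBitSeq Y ∧ TuringLE Y A})

/-! ### Cardinal characteristics -/

/-- The cardinal characteristic `𝔡(p)`. -/
noncomputable def dChar (p : ℝ) : Cardinal :=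
  sInf {c : Cardinal | ∃ G : Set (ℕ → ℕ), c = Cardinal.mk G ∧ (∀ y ∈ G, IsBitSeq y) ∧
    ∀ x : ℕ → ℕ, IsBitSeq x → ∃ y ∈ G, p < lowerDensity (agree x y)}

/-- The cardinal characteristic `𝔟(p)`. -/
noncomputable def bChar (p : ℝ) : Cardinal :=
  sInf {c : Cardinal | ∃ F : Set (ℕ → ℕ), c = Cardinal.mk F ∧ (∀ x ∈ F, IsBitSeq x) ∧
    ∀ y : ℕ → ℕ, IsBitSeq y → ∃ x ∈ F, lowerDensity (agree x y) ≤ p}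

/-- The cardinal characteristic `𝔡(≠*, h)`. -/
noncomputable def dNeq (h : ℕ → ℕ) : Cardinal :=
  sInf {c : Cardinal | ∃ G : Set (ℕ → ℕ), c = Cardinal.mk G ∧ (∀ y ∈ G, ∀ n, y n < h n) ∧
    ∀ x : ℕ → ℕ, ∃ y ∈ G, ∀ᶠ n in atTop, x n ≠ y n}

/-- The cardinal characteristic `𝔟(≠*, h)`. -/
noncomputable def bNeq (h : ℕ → ℕ) : Cardinal :=
  sInf {c : Cardinal | ∃ F : Set (ℕ → ℕ), c = Cardinal.mk F ∧
    ∀ y : ℕ → ℕ, (∀ n, y n < h n) → ∃ x ∈ F, ∃ᶠ n in atTop, x n = y n}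

/-- The cardinal characteristic `𝔡⟨≠*, ĥ, q⟩`. -/
noncomputable def dHam (hh : ℕ → ℕ) (q : ℝ) : Cardinal :=
  sInf {c : Cardinal | ∃ G : Set (ℕ → ℕ), c = Cardinal.mk G ∧
    (∀ y ∈ G, ∀ n, y n < 2 ^ hh n) ∧
    ∀ x : ℕ → ℕ, (∀ n, x n < 2 ^ hh n) →
      ∃ y ∈ G, ∀ᶠ n in atTop, q ≤ nhd (hh n) (x n) (y n)}

/-- The cardinal characteristic `𝔟⟨≠*, ĥ, q⟩`. -/
noncomputable def bHam (hh : ℕ → ℕ) (q : ℝ) : Cardinal :=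
  sInf {c : Cardinal | ∃ F : Set (ℕ → ℕ), c = Cardinal.mk F ∧
    (∀ x ∈ F, ∀ n, x n < 2 ^ hh n) ∧
    ∀ y : ℕ → ℕ, (∀ n, y n < 2 ^ hh n) →
      ∃ x ∈ F, ∃ᶠ n in atTop, nhd (hh n) (x n) (y n) < q}

/-- `s : ℕ → Finset ℕ` is an `L`-slalom bounded by `u`. -/
def IsSlalom (u : ℕ → ℕ) (L : ℕ) (s : ℕ → Finset ℕ) : Prop :=
  ∀ n, (∀ i ∈ s n, i < u n) ∧ (s n).card ≤ L

/-- The cardinal characteristic `𝔡⟨∌*, u, L⟩`. -/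
noncomputable def dSlalom (u : ℕ → ℕ) (L : ℕ) : Cardinal :=
  sInf {c : Cardinal | ∃ G : Set (ℕ → ℕ), c = Cardinal.mk G ∧ (∀ y ∈ G, ∀ n, y n < u n) ∧
    ∀ s : ℕ → Finset ℕ, IsSlalom u L s → ∃ y ∈ G, ∀ᶠ n in atTop, y n ∉ s n}

/-- The cardinal characteristic `𝔟⟨∌*, u, L⟩`. -/
noncomputable def bSlalom (u : ℕ → ℕ) (L : ℕ) : Cardinal :=
  sInf {c : Cardinal | ∃ F : Set (ℕ → Finset ℕ), c = Cardinal.mk F ∧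
    (∀ s ∈ F, IsSlalom u L s) ∧
    ∀ y : ℕ → ℕ, (∀ n, y n < u n) → ∃ s ∈ F, ∃ᶠ n in atTop, y n ∈ s n}

/-! ### Order functions and list decoding -/

/-- An order function: nondecreasing, unbounded and computable. -/
def IsOrderFunc (F : ℕ → ℕ) : Prop :=
  Computable F ∧ Monotone F ∧ ∀ b : ℕ, ∃ n, b < F n

/-- The list-decoding property for parameters `q`, `ε`, `L`: for every length `r`
there is a set `C` of `2^⌊εr⌋` binary strings of length `r` (coded as numbers
below `2^r`) such that every string has at most `L` elements of `C` within
normalized Hamming distance `< q`. -/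
def ListDecoding (q ε : ℝ) (L : ℕ) : Prop :=
  ∀ r : ℕ, ∃ C : Finset ℕ, (∀ a ∈ C, a < 2 ^ r) ∧ C.card = 2 ^ ⌊ε * r⌋₊ ∧
    ∀ σ < 2 ^ r, (C.filter fun τ => nhd r σ τ < q).card ≤ L

/-!
Split `ℕ` into the residue classes modulo `k`: a function eventually differs from `x` as soon
as it eventually differs from `x` on each class, and `k` computable functions interleave into
one computable function. If no slice `n ↦ g (a * n + j)` of `g ∈ IOE(2^(b^n))` were in
`IOE(2^(a^n))`, interleaving the `a` computable witnesses would give a computable function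
below `2^(b^n)` (as `a ^ (m / a) ≤ b ^ m`) that `g` eventually avoids. Dually, for
`g ∈ AED(2^(b^n))` the stretched function `m ↦ g (m / b)` avoids every computable `x`, because
`g` avoids each slice of `x`; and the stretching is a single functional for all `g`.
-/

namespace OracleCode

def ofCode : Nat.Partrec.Code → OracleCode
  | .zero => .zero
  | .succ => .succ
  | .left => .left
  | .right => .right
  | .pair cf cg => .pair (ofCode cf) (ofCode cg)
  | .comp cf cg => .comp (ofCode cf) (ofCode cg)
  | .prec cf cg => .prec (ofCode cf) (ofCode cg)
  | .rfind' cf => .rfind' (ofCode cf)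

theorem eval_ofCode (g : ℕ → ℕ) (c : Nat.Partrec.Code) : (ofCode c).eval g = c.eval := by
  induction c <;> simp [ofCode, eval, Nat.Partrec.Code.eval, *] <;> rfl

theorem exists_eval_eq_comp {h : ℕ → ℕ} (hh : Computable h) :
    ∃ c : OracleCode, ∀ g n, c.eval g n = Part.some (g (h n)) := by
  obtain ⟨c, hc⟩ := Nat.Partrec.Code.exists_code.1 (Partrec.nat_iff.1 hh)
  refine ⟨.comp .oracle (ofCode c), fun g n => ?_⟩
  change ((ofCode c).eval g n).bind (eval g .oracle) = _
  rw [eval_ofCode, hc]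
  exact Part.bind_some _ _

end OracleCode

theorem turingLE_comp (g : ℕ → ℕ) {h : ℕ → ℕ} (hh : Computable h) :
    TuringLE (fun n => g (h n)) g :=
  (OracleCode.exists_eval_eq_comp hh).imp fun _ hc => hc g

theorem computable_affine (k j : ℕ) : Computable fun n : ℕ => k * n + j :=
  (Primrec.nat_add.comp (Primrec.nat_mul.comp (.const k) .id) (.const j)).to_comp

theorem computable_interleave {k : ℕ} (hk : 0 < k) {x : ℕ → ℕ → ℕ}
    (hx : ∀ j < k, Computable (x j)) : Computable fun m => x (m % k) (m / k) := by
  -- run the universal function on a code looked up in a finite table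
  have hcode : ∀ j, ∃ c : Nat.Partrec.Code, j < k → c.eval = fun n => Part.some (x j n) :=
    fun j => if hj : j < k then
        (Nat.Partrec.Code.exists_code.1 (Partrec.nat_iff.1 (hx j hj))).imp fun _ hc _ => hc
      else ⟨.zero, fun h => absurd h hj⟩
  choose c hc using hcode
  let codes := (List.range k).map c
  have hlookup : Computable fun m => codes.getD (m % k) .zero :=
    ((Primrec.list_getD _).comp (.const codes) (Primrec.nat_mod.comp .id (.const k))).to_comp
  refine (Nat.Partrec.Code.eval_part.comp hlookup
    (Primrec.nat_div.comp .id (.const k)).to_comp).of_eq fun m => ?_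
  have hm := Nat.mod_lt m hk
  simp [codes, List.getD_eq_getElem?_getD, List.getElem?_range hm, hc _ hm]

theorem eventually_atTop_of_forall_mod {k : ℕ} (hk : 0 < k) {P : ℕ → Prop}
    (h : ∀ j < k, ∀ᶠ n in atTop, P (k * n + j)) : ∀ᶠ m in atTop, P m := by
  obtain ⟨N, hN⟩ := eventually_atTop.1 <|
    (eventually_all_finset (Finset.range k)).2 fun j hj => h j (Finset.mem_range.1 hj)
  refine eventually_atTop.2 ⟨k * N, fun m hm => ?_⟩
  have hslice := hN (m / k) ((Nat.le_div_iff_mul_le hk).2 (by linarith)) (m % k)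
    (Finset.mem_range.2 (Nat.mod_lt m hk))
  rwa [Nat.div_add_mod] at hslice

theorem pow_div_le_pow {a b : ℕ} (hb : 1 < b) (m : ℕ) : a ^ (m / a) ≤ b ^ m :=
  calc a ^ (m / a) ≤ (b ^ a) ^ (m / a) :=
        Nat.pow_le_pow_left (Nat.lt_two_pow_self.le.trans (Nat.pow_le_pow_left hb a)) _
    _ = b ^ (a * (m / a)) := (pow_mul b a _).symm
    _ ≤ b ^ m := Nat.pow_le_pow_right (by omega) (Nat.mul_div_le m a)

theorem two_pow_pow_div_le {a b : ℕ} (hb : 1 < b) (m : ℕ) : 2 ^ a ^ (m / a) ≤ 2 ^ b ^ m :=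
  Nat.pow_le_pow_right two_pos (pow_div_le_pow hb m)

theorem muchnikLE_IOE {a b : ℕ} (ha : 0 < a) (hb : 1 < b) :
    MuchnikLE (IOE fun n => 2 ^ a ^ n) (IOE fun n => 2 ^ b ^ n) := by
  intro g hg
  obtain ⟨j, -, hslice⟩ : ∃ j < a, (fun n => g (a * n + j)) ∈ IOE fun n => 2 ^ a ^ n := by
    by_contra! hnone
    simp only [IOE, Set.mem_ofPred_eq, not_forall, not_frequently] at hnone
    choose! x hxc hxb hxg using hnone
    refine hg _ (computable_interleave ha hxc) (fun m => ?_)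
      (eventually_atTop_of_forall_mod ha fun j hj => (hxg j hj).mono fun n hn => ?_)
    · exact (hxb _ (Nat.mod_lt m ha) _).trans_le (two_pow_pow_div_le hb m)
    · simpa [Nat.mul_add_div ha, Nat.div_eq_of_lt hj, Nat.mod_eq_of_lt hj] using hn
  exact ⟨_, hslice, turingLE_comp g (computable_affine a j)⟩

theorem medvedevLE_AED {a b : ℕ} (ha : 1 < a) (hb : 0 < b) :
    MedvedevLE (AED fun n => 2 ^ a ^ n) (AED fun n => 2 ^ b ^ n) := by
  obtain ⟨c, hc⟩ := OracleCode.exists_eval_eq_comp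
    (Primrec.nat_div.comp .id (.const b)).to_comp
  refine ⟨c, fun g hg => ⟨fun m => g (m / b), ⟨fun m => ?_, fun x hx => ?_⟩, hc g⟩⟩
  · exact (hg.1 _).trans_le (two_pow_pow_div_le ha m)
  · refine eventually_atTop_of_forall_mod hb fun j hj =>
      (hg.2 _ (hx.comp (computable_affine b j))).mono fun n hn => ?_
    simpa [Nat.mul_add_div hb, Nat.div_eq_of_lt hj] using hn

/-- For all integers `a, b > 1`: `IOE(n ↦ 2^(a^n)) ≡_W IOE(n ↦ 2^(b^n))` and
`AED(n ↦ 2^(a^n)) ≡_S AED(n ↦ 2^(b^n))`. -/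
theorem stmt8 (a b : ℕ) (ha : 1 < a) (hb : 1 < b) :
    MuchnikEquiv (IOE fun n => 2 ^ a ^ n) (IOE fun n => 2 ^ b ^ n) ∧
      MedvedevEquiv (AED fun n => 2 ^ a ^ n) (AED fun n => 2 ^ b ^ n) :=
  ⟨⟨muchnikLE_IOE (by omega) hb, muchnikLE_IOE (by omega) ha⟩,
    ⟨medvedevLE_AED ha (by omega), medvedevLE_AED hb (by omega)⟩⟩

end Paper
end

section
/- Let L ∈ ℕ, let u: ℕ→ℕ be a computable nondecreasing function, and let w(n) = u(2n). Then D⟨∌*, u, L⟩ ≡_W D⟨∌*, w, L⟩ (Muchnik equivalence) and B⟨∌*, u, L⟩ ≡_S B⟨∌*, w, L⟩ (Medvedev equivalence). -/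
open Filter

namespace Paper

/-! Split `ℕ` into even and odd positions and write `w n = u (2 * n)`. A `w`-slalom spread over
the even positions is a `u`-slalom, and a `u`-slalom `s` yields two `w`-slaloms: its even part and
its odd part cut down below `w`. Dually, `g ↦ (n ↦ g (2 * n))` and `g ↦ (m ↦ g (m / 2))` move
functions between the bounds `u` and `w`; the latter needs `u` nondecreasing. All these maps are
uniform, which gives the Medvedev equivalence of the `B`-problems. Only `D⟨∌*, w, L⟩ ≤_W
D⟨∌*, u, L⟩` needs a case split: if the even part of `s` misses some computable `y₀` cofinitely,
then interleaving `y₀` with any computable `w`-bounded `y` shows that the odd part of `s` captures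
`y` infinitely often. -/

lemma eventually_atTop_iff_even_odd {P : ℕ → Prop} :
    (∀ᶠ m in atTop, P m) ↔ (∀ᶠ n in atTop, P (2 * n)) ∧ ∀ᶠ n in atTop, P (2 * n + 1) := by
  simp only [eventually_atTop]
  constructor
  · rintro ⟨N, hN⟩
    exact ⟨⟨N, fun n hn => hN _ (by omega)⟩, ⟨N, fun n hn => hN _ (by omega)⟩⟩
  · rintro ⟨⟨N₀, h₀⟩, ⟨N₁, h₁⟩⟩
    refine ⟨2 * (N₀ + N₁), fun m hm => ?_⟩
    obtain ⟨n, rfl | rfl⟩ := Nat.even_or_odd' m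
    · exact h₀ n (by omega)
    · exact h₁ n (by omega)

lemma frequently_atTop_iff_even_odd {P : ℕ → Prop} :
    (∃ᶠ m in atTop, P m) ↔ (∃ᶠ n in atTop, P (2 * n)) ∨ ∃ᶠ n in atTop, P (2 * n + 1) := by
  simp only [Filter.Frequently]
  rw [eventually_atTop_iff_even_odd, not_and_or]

def interleave (a b : ℕ → ℕ) (m : ℕ) : ℕ :=
  bif m.bodd then b m.div2 else a m.div2

@[simp]
lemma interleave_two_mul (a b : ℕ → ℕ) (n : ℕ) : interleave a b (2 * n) = a n := by
  simp [interleave]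

@[simp]
lemma interleave_two_mul_add_one (a b : ℕ → ℕ) (n : ℕ) : interleave a b (2 * n + 1) = b n := by
  simp [interleave]

lemma Computable.interleave {a b : ℕ → ℕ} (ha : Computable a) (hb : Computable b) :
    Computable (interleave a b) :=
  Computable.cond Computable.nat_bodd (hb.comp Computable.nat_div2) (ha.comp Computable.nat_div2)

lemma primrec_two_pow : Primrec (fun n : ℕ => 2 ^ n) :=
  (Primrec₂.unpaired'.1 Nat.Primrec.pow).comp (Primrec.const 2) Primrec.id

namespace OracleCode

def ofPartrecCode : Nat.Partrec.Code → OracleCode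
  | .zero => .zero
  | .succ => .succ
  | .left => .left
  | .right => .right
  | .pair cf cg => .pair (ofPartrecCode cf) (ofPartrecCode cg)
  | .comp cf cg => .comp (ofPartrecCode cf) (ofPartrecCode cg)
  | .prec cf cg => .prec (ofPartrecCode cf) (ofPartrecCode cg)
  | .rfind' cf => .rfind' (ofPartrecCode cf)

lemma eval_ofPartrecCode (g : ℕ → ℕ) (c : Nat.Partrec.Code) :
    eval g (ofPartrecCode c) = c.eval := by
  induction c <;> simp [ofPartrecCode, eval, Nat.Partrec.Code.eval, *] <;> rfl

lemma exists_eval_eq_of_computable {h : ℕ → ℕ} (hh : Computable h) :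
    ∃ c : OracleCode, ∀ g n, c.eval g n = Part.some (h n) := by
  obtain ⟨c, hc⟩ := Nat.Partrec.Code.exists_code.1 (Partrec.nat_iff.1 hh)
  exact ⟨ofPartrecCode c, fun g n => by rw [eval_ofPartrecCode, hc]; rfl⟩

lemma exists_eval_eq_of_computable₂ {F : ℕ → ℕ → ℕ} {k : ℕ → ℕ}
    (hF : Computable₂ F) (hk : Computable k) :
    ∃ c : OracleCode, ∀ g n, c.eval g n = Part.some (F n (g (k n))) := by
  have hF' : Computable fun p : ℕ => F p.unpair.1 p.unpair.2 :=
    hF.comp (Primrec.fst.comp Primrec.unpair).to_comp (Primrec.snd.comp Primrec.unpair).to_comp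
  obtain ⟨cF, hcF⟩ := exists_eval_eq_of_computable hF'
  obtain ⟨ck, hck⟩ := exists_eval_eq_of_computable hk
  -- `pair left right` is the identity code
  refine ⟨.comp cF (.pair (.pair .left .right) (.comp .oracle ck)), fun g n => ?_⟩
  simp only [eval, Seq.seq, Part.map_eq_map, PFun.coe_val, Part.bind_some, Part.map_some,
    Nat.pair_unpair, hck]
  change ((Part.map (Nat.pair n) ((Part.some (k n)).bind fun m => Part.some (g m))).bind
    fun p => eval g cF p) = _
  rw [Part.bind_some, Part.map_some, Part.bind_some, hcF, Nat.unpair_pair]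

end OracleCode

lemma turingLE_of_computable₂ {F : ℕ → ℕ → ℕ} {k : ℕ → ℕ} (hF : Computable₂ F)
    (hk : Computable k) (g : ℕ → ℕ) : TuringLE (fun n => F n (g (k n))) g :=
  let ⟨c, hc⟩ := OracleCode.exists_eval_eq_of_computable₂ hF hk
  ⟨c, hc g⟩

lemma medvedevLE_of_computable₂ {B C : MassProblem} {F : ℕ → ℕ → ℕ} {k : ℕ → ℕ}
    (hF : Computable₂ F) (hk : Computable k) (hBC : ∀ g ∈ C, (fun n => F n (g (k n))) ∈ B) :
    MedvedevLE B C :=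
  let ⟨c, hc⟩ := OracleCode.exists_eval_eq_of_computable₂ hF hk
  ⟨c, fun g hg => ⟨_, hBC g hg, hc g⟩⟩

namespace IsSlalomCode

variable {u : ℕ → ℕ} {L : ℕ}

lemma zero : IsSlalomCode u L 0 := fun n => by simp

lemma comp {s : ℕ → ℕ} (hs : IsSlalomCode u L s) (k : ℕ → ℕ) :
    IsSlalomCode (fun n => u (k n)) L (fun n => s (k n)) :=
  fun n => hs (k n)

lemma mod_two_pow {s : ℕ → ℕ} (hs : IsSlalomCode u L s) (v : ℕ → ℕ) :
    IsSlalomCode v L (fun n => s n % 2 ^ v n) := by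
  intro n
  simp only [Nat.testBit_mod_two_pow, Bool.and_eq_true, decide_eq_true_eq]
  refine ⟨fun i hi => hi.1, le_trans (Finset.card_le_card fun i hi => ?_) (hs n).2⟩
  simp only [Finset.mem_filter, Finset.mem_range] at hi ⊢
  exact ⟨(hs n).1 i hi.2.2, hi.2.2⟩

lemma interleave {a b : ℕ → ℕ} (ha : IsSlalomCode (fun n => u (2 * n)) L a)
    (hb : IsSlalomCode (fun n => u (2 * n + 1)) L b) : IsSlalomCode u L (interleave a b) := by
  intro m
  obtain ⟨n, rfl | rfl⟩ := Nat.even_or_odd' m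
  · simpa using ha n
  · simpa using hb n

end IsSlalomCode

lemma computable₂_mod_two_pow {v : ℕ → ℕ} (hv : Computable v) :
    Computable₂ fun n x : ℕ => x % 2 ^ v n :=
  Primrec.nat_mod.to_comp.comp Computable.snd
    (primrec_two_pow.to_comp.comp (hv.comp Computable.fst))

section Dilation

variable {u : ℕ → ℕ} {L : ℕ}

lemma probDSlalom_muchnikLE_two_mul :
    MuchnikLE (probDSlalom u L) (probDSlalom (fun n => u (2 * n)) L) := by
  intro t ht
  refine ⟨interleave t 0, ⟨ht.1.interleave IsSlalomCode.zero, fun y hy hyu => ?_⟩, ?_⟩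
  · refine frequently_atTop_iff_even_odd.2 (Or.inl ?_)
    simpa using ht.2 _ (hy.comp Primrec.nat_double.to_comp) fun n => hyu (2 * n)
  · exact turingLE_of_computable₂ (F := fun m x => bif m.bodd then 0 else x)
      (Computable.cond (Computable.nat_bodd.comp Computable.fst) (Computable.const 0)
        Computable.snd) Computable.nat_div2 t

lemma odd_mem_probDSlalom {s y₀ : ℕ → ℕ} (hm : Monotone u) (hs : s ∈ probDSlalom u L)
    (hy₀ : Computable y₀) (hy₀u : ∀ n, y₀ n < u (2 * n))
    (hmiss : ∀ᶠ n in atTop, (s (2 * n)).testBit (y₀ n) = false) :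
    (fun n => s (2 * n + 1) % 2 ^ u (2 * n)) ∈ probDSlalom (fun n => u (2 * n)) L := by
  refine ⟨(hs.1.comp _).mod_two_pow _, fun y hy hyu => ?_⟩
  have hy'u : ∀ m, interleave y₀ y m < u m := by
    intro m
    obtain ⟨n, rfl | rfl⟩ := Nat.even_or_odd' m
    · simpa using hy₀u n
    · simpa using (hyu n).trans_le (hm (Nat.le_succ _))
  obtain hEven | hOdd :=
    frequently_atTop_iff_even_odd.1 (hs.2 _ (Computable.interleave hy₀ hy) hy'u)
  · obtain ⟨n, hhit, hmissn⟩ := (hEven.and_eventually hmiss).exists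
    simp [hmissn] at hhit
  · refine hOdd.mono fun n hn => ?_
    simpa [Nat.testBit_mod_two_pow, hyu n] using hn

lemma probDSlalom_two_mul_muchnikLE (hu : Computable u) (hm : Monotone u) :
    MuchnikLE (probDSlalom (fun n => u (2 * n)) L) (probDSlalom u L) := by
  intro s hs
  by_cases hEven : (fun n => s (2 * n)) ∈ probDSlalom (fun n => u (2 * n)) L
  · exact ⟨_, hEven, turingLE_of_computable₂ (F := fun _ x => x) Computable.snd
      Primrec.nat_double.to_comp s⟩
  · obtain ⟨y₀, hy₀, hy₀u, hmiss⟩ : ∃ y₀ : ℕ → ℕ, Computable y₀ ∧ (∀ n, y₀ n < u (2 * n)) ∧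
        ∀ᶠ n in atTop, (s (2 * n)).testBit (y₀ n) = false := by
      simpa [probDSlalom, hs.1.comp, Filter.not_frequently] using hEven
    exact ⟨_, odd_mem_probDSlalom hm hs hy₀ hy₀u hmiss, turingLE_of_computable₂
      (computable₂_mod_two_pow (hu.comp Primrec.nat_double.to_comp))
      Primrec.nat_double_succ.to_comp s⟩

lemma probBSlalom_medvedevLE_two_mul (hu : Computable u) (hm : Monotone u) :
    MedvedevLE (probBSlalom u L) (probBSlalom (fun n => u (2 * n)) L) := by
  refine medvedevLE_of_computable₂ (F := fun _ x => x) Computable.snd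
    (Primrec.nat_div.comp Primrec.id (Primrec.const 2)).to_comp fun g hg => ⟨?_, ?_⟩
  · exact fun m => (hg.1 (m / 2)).trans_le (hm (Nat.mul_div_le m 2))
  · intro s hs hsl
    refine eventually_atTop_iff_even_odd.2 ⟨?_, ?_⟩
    · simpa using hg.2 _ (hs.comp Primrec.nat_double.to_comp) (hsl.comp _)
    · have hodd := hg.2 _ ((computable₂_mod_two_pow (hu.comp Primrec.nat_double.to_comp)).comp
        Computable.id (hs.comp Primrec.nat_double_succ.to_comp)) ((hsl.comp _).mod_two_pow _)
      refine hodd.mono fun n hn => ?_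
      simpa [Nat.testBit_mod_two_pow, hg.1 n, show (2 * n + 1) / 2 = n by omega] using hn

lemma probBSlalom_two_mul_medvedevLE :
    MedvedevLE (probBSlalom (fun n => u (2 * n)) L) (probBSlalom u L) := by
  refine medvedevLE_of_computable₂ (F := fun _ x => x) Computable.snd
    Primrec.nat_double.to_comp fun g hg => ⟨fun n => hg.1 (2 * n), fun t ht htl => ?_⟩
  have hspread := hg.2 _ (Computable.interleave ht (Computable.const 0)) (htl.interleave .zero)
  simpa using (eventually_atTop_iff_even_odd.1 hspread).1

end Dilation

/-- For `L ∈ ℕ`, computable nondecreasing `u`, and `w(n) = u(2n)`: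
`D⟨∌*, u, L⟩ ≡_W D⟨∌*, w, L⟩` and `B⟨∌*, u, L⟩ ≡_S B⟨∌*, w, L⟩`. -/
theorem stmt12 (L : ℕ) (u : ℕ → ℕ) (hu : Computable u) (hm : Monotone u) :
    MuchnikEquiv (probDSlalom u L) (probDSlalom (fun n => u (2 * n)) L) ∧
      MedvedevEquiv (probBSlalom u L) (probBSlalom (fun n => u (2 * n)) L) :=
  ⟨⟨probDSlalom_muchnikLE_two_mul, probDSlalom_two_mul_muchnikLE hu hm⟩,
    probBSlalom_medvedevLE_two_mul hu hm, probBSlalom_two_mul_medvedevLE⟩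

end Paper
end
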